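/- If G is a graph that is not complete and G has a vertex v of degree at most 1 such that G − v is a complete graph on at least 3 vertices, then B(G) = 2. -/

import Mathlib

open Finset

variable {V : Type*}

/-- A proper coloring given as a function to ℕ. -/
def IsProperColoring (G : SimpleGraph V) (c : V → ℕ) : Prop :=
  ∀ ⦃u v⦄, G.Adj u v → c u ≠ c v

variable [Fintype V] [DecidableEq V]

/-- Two colorings use every color the same number of times. -/
def SameColorCounts (c c' : V → ℕ) : Prop :=
  ∀ k : ℕ, (univ.filter fun v => c v = k).card = (univ.filter fun v => c' v = k).card

/-- The number of vertices on which two colorings differ. -/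
def recolorCount (c c' : V → ℕ) : ℕ := (univ.filter fun v => c v ≠ c' v).card

/-- The ℕ-valued chromatic number. -/
noncomputable def chromNum (G : SimpleGraph V) : ℕ := G.chromaticNumber.toNat

/-- A proper coloring of `G` using exactly `χ(G)` colors. -/
noncomputable def IsOptimalColoring (G : SimpleGraph V) (f : V → ℕ) : Prop :=
  IsProperColoring G f ∧ (univ.image f).card = chromNum G

/-- The villainy of a coloring `c`: the least number of vertices that must be
recolored to obtain a proper coloring using each color as often as `c` does. -/
noncomputable def colVillainy (G : SimpleGraph V) (c : V → ℕ) : ℕ :=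
  sInf {n | ∃ c', IsProperColoring G c' ∧ SameColorCounts c c' ∧ recolorCount c c' = n}

/-- `c` is a permutation of the coloring `f`. -/
def IsPermutationOf (c f : V → ℕ) : Prop := ∃ σ : Equiv.Perm V, c = f ∘ σ

/-- The villainy of `G`: the maximum villainy over all permutations of optimal
proper colorings of `G`. -/
noncomputable def villainy (G : SimpleGraph V) : ℕ :=
  sSup {n | ∃ f c, IsOptimalColoring G f ∧ IsPermutationOf c f ∧ colVillainy G c = n}

/-! An optimal coloring of `G` uses `|V| - 1` colors (`G - v` is a clique, and `v` can share its
color with a non-neighbour), so it and each of its permutations `c` repeat exactly one color, on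
a pair `{x, y}`. Exchanging the colors of `x` and a third vertex `w` moves the repeated color to
`{w, y}` and recolors two vertices; the result is proper once `w` is not adjacent to `y`. Up to
exchanging `x` and `y` such a `w` exists: if `v ∈ {x, y}`, a non-neighbour of `v` outside the pair
(as `|V| ≥ 4`), otherwise `v` itself, which is adjacent to at most one of `x, y`. Recoloring a
single vertex changes the color counts, so `B(c) = 2` for improper `c`, and moving the repeated
color of an optimal coloring onto an edge of `G - v` produces one. -/

omit [DecidableEq V] in
theorem sameColorCounts_comp_perm (c : V → ℕ) (σ : Equiv.Perm V) :
    SameColorCounts c (c ∘ σ) :=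
  fun k => Finset.card_equiv σ.symm (by simp)

omit [DecidableEq V] in
theorem SameColorCounts.symm {c c' : V → ℕ} (h : SameColorCounts c c') : SameColorCounts c' c :=
  fun k => (h k).symm

omit [DecidableEq V] in
theorem eq_of_recolorCount_eq_zero {c c' : V → ℕ} (h : recolorCount c c' = 0) : c = c' := by
  have := Finset.filter_eq_empty_iff.mp (Finset.card_eq_zero.mp h)
  exact funext fun x => not_not.mp (this (mem_univ x))

omit [DecidableEq V] in
theorem SameColorCounts.recolorCount_ne_one {c c' : V → ℕ} (h : SameColorCounts c c') :
    recolorCount c c' ≠ 1 := by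
  intro h1
  obtain ⟨z, hz⟩ := Finset.card_eq_one.mp h1
  have hdiff : ∀ x, c x ≠ c' x ↔ x = z := fun x => by simpa using Finset.ext_iff.mp hz x
  -- the class of `c z` loses `z` and gains nothing
  have hsub : univ.filter (fun x => c' x = c z) ⊂ univ.filter (fun x => c x = c z) := by
    rw [Finset.ssubset_iff_of_subset]
    · exact ⟨z, by simp, by simpa [eq_comm] using (hdiff z).mpr rfl⟩
    · intro x hx
      rw [mem_filter] at hx ⊢
      by_cases hxz : x = z
      · exact ⟨hx.1, hxz ▸ rfl⟩
      · exact ⟨hx.1, (not_not.mp (mt (hdiff x).mp hxz)).trans hx.2⟩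
  exact (Finset.card_lt_card hsub).ne (h (c z)).symm

theorem recolorCount_comp_swap {c : V → ℕ} {a b : V} (h : c a ≠ c b) :
    recolorCount c (c ∘ Equiv.swap a b) = 2 := by
  have hab : a ≠ b := fun e => h (congrArg c e)
  have hdiff : univ.filter (fun x => c x ≠ (c ∘ Equiv.swap a b) x) = {a, b} := by
    ext x
    by_cases hxa : x = a
    · subst hxa; simp [h]
    by_cases hxb : x = b
    · subst hxb; simp [Ne.symm h]
    simp [Equiv.swap_apply_of_ne_of_ne hxa hxb, hxa, hxb]
  rw [recolorCount, hdiff, card_pair hab]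

section colVillainy

variable {G : SimpleGraph V} {c c' : V → ℕ}

omit [DecidableEq V] in
theorem colVillainy_le (hc' : IsProperColoring G c') (hs : SameColorCounts c c') :
    colVillainy G c ≤ recolorCount c c' :=
  Nat.sInf_le ⟨c', hc', hs, rfl⟩

omit [DecidableEq V] in
theorem two_le_colVillainy (hc : ¬ IsProperColoring G c) (hc' : IsProperColoring G c')
    (hs : SameColorCounts c c') : 2 ≤ colVillainy G c := by
  obtain ⟨d, hd, hsd, hcount⟩ := Nat.sInf_mem (⟨_, c', hc', hs, rfl⟩ :
    {n | ∃ d, IsProperColoring G d ∧ SameColorCounts c d ∧ recolorCount c d = n}.Nonempty)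
  have h0 : recolorCount c d ≠ 0 := fun h => hc (eq_of_recolorCount_eq_zero h ▸ hd)
  have h1 := hsd.recolorCount_ne_one
  rw [colVillainy, ← hcount]
  omega

end colVillainy

def CollidesOnlyAt (c : V → ℕ) (x y : V) : Prop :=
  ∀ p q, p ≠ q ∧ c p = c q ↔ s(p, q) = s(x, y)

namespace CollidesOnlyAt

variable {c : V → ℕ} {x y w : V}

omit [Fintype V] [DecidableEq V] in
theorem ne (h : CollidesOnlyAt c x y) : x ≠ y := ((h x y).mpr rfl).1

omit [Fintype V] [DecidableEq V] in
theorem eq (h : CollidesOnlyAt c x y) : c x = c y := ((h x y).mpr rfl).2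

omit [Fintype V] [DecidableEq V] in
theorem symm (h : CollidesOnlyAt c x y) : CollidesOnlyAt c y x := by
  intro p q
  rw [h p q, Sym2.eq_swap (a := x)]

omit [Fintype V] [DecidableEq V] in
theorem apply_ne (h : CollidesOnlyAt c x y) (hwx : w ≠ x) (hwy : w ≠ y) : c w ≠ c x := by
  intro hcw
  rcases Sym2.eq_iff.mp ((h w x).mp ⟨hwx, hcw⟩) with ⟨hw, -⟩ | ⟨hw, -⟩
  exacts [hwx hw, hwy hw]

omit [Fintype V] in
theorem comp_swap (h : CollidesOnlyAt c x y) (hwy : w ≠ y) :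
    CollidesOnlyAt (c ∘ Equiv.swap x w) w y := by
  intro p q
  have hpair : s(x, y) = Sym2.map (Equiv.swap x w) s(w, y) := by
    rw [Sym2.map_mk, Equiv.swap_apply_right,
      Equiv.swap_apply_of_ne_of_ne h.ne.symm (Ne.symm hwy)]
  rw [Function.comp_apply, Function.comp_apply, ← (Equiv.swap x w).injective.ne_iff, h,
    hpair, ← Sym2.map_mk, (Sym2.map.injective (Equiv.swap x w).injective).eq_iff]

omit [Fintype V] [DecidableEq V] in
theorem isProperColoring_iff {G : SimpleGraph V} (h : CollidesOnlyAt c x y) :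
    IsProperColoring G c ↔ ¬ G.Adj x y := by
  refine ⟨fun hc hxy => hc hxy h.eq, fun hxy p q hpq hc => hxy ?_⟩
  rw [← SimpleGraph.mem_edgeSet, ← (h p q).mp ⟨G.ne_of_adj hpq, hc⟩]
  exact hpq

omit [Fintype V] [DecidableEq V] in
theorem of_injOn (hxy : x ≠ y) (hc : c x = c y) (hinj : Set.InjOn c {x}ᶜ) :
    CollidesOnlyAt c x y := by
  intro p q
  refine ⟨fun ⟨hpq, hcpq⟩ => ?_, fun he => ?_⟩
  · by_cases hp : p = x
    · subst hp
      rw [hinj (Ne.symm hpq) (Ne.symm hxy) (hcpq.symm.trans hc)]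
    by_cases hq : q = x
    · subst hq
      rw [hinj hp (Ne.symm hxy) (hcpq.trans hc), Sym2.eq_swap]
    exact absurd (hinj hp hq hcpq) hpq
  · rcases Sym2.eq_iff.mp he with ⟨rfl, rfl⟩ | ⟨rfl, rfl⟩
    exacts [⟨hxy, hc⟩, ⟨Ne.symm hxy, hc.symm⟩]

theorem exists_of_card_image (hc : #(univ.image c) + 1 = Fintype.card V) :
    ∃ x y, CollidesOnlyAt c x y := by
  obtain ⟨x, y, hcxy, hxy⟩ := Function.not_injective_iff.mp fun hinj : Function.Injective c => by
    have := card_image_of_injective univ hinj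
    rw [card_univ] at this
    omega
  have himage : (univ.erase x).image c = univ.image c := by
    rw [← insert_erase (mem_univ x), image_insert, erase_insert (notMem_erase x _),
      insert_eq_of_mem]
    rw [hcxy]
    exact mem_image_of_mem c (mem_erase.mpr ⟨Ne.symm hxy, mem_univ y⟩)
  have hinj : Set.InjOn c {x}ᶜ := by
    have := card_image_iff.mp (by rw [himage, card_erase_of_mem (mem_univ x), card_univ]; omega)
    simpa [Set.compl_eq_univ_sdiff] using this
  exact ⟨x, y, of_injOn hxy hcxy hinj⟩

end CollidesOnlyAt

omit [DecidableEq V] in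
theorem IsProperColoring.chromaticNumber_le_card_image {G : SimpleGraph V} {f : V → ℕ}
    (hf : IsProperColoring G f) : G.chromaticNumber ≤ #(univ.image f) := by
  let C : G.Coloring (univ.image f) :=
    SimpleGraph.Coloring.mk (fun x => ⟨f x, mem_image_of_mem f (mem_univ x)⟩)
      fun hadj e => hf hadj (congrArg Subtype.val e)
  simpa using C.colorable.chromaticNumber_le

omit [DecidableEq V] in
theorem chromNum_eq_card_of_isClique {G : SimpleGraph V} {f : V → ℕ} {s : Finset V}
    (hf : IsProperColoring G f) (hs : G.IsClique (s : Set V)) (hfs : #(univ.image f) ≤ #s) :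
    chromNum G = #s := by
  have hle : G.chromaticNumber ≤ #s :=
    hf.chromaticNumber_le_card_image.trans (by exact_mod_cast hfs)
  rw [chromNum, le_antisymm hle hs.card_le_chromaticNumber, ENat.toNat_natCast]

theorem image_univ_comp_perm (g : V → ℕ) (σ : Equiv.Perm V) :
    univ.image (g ∘ σ) = univ.image g := by
  rw [← image_image, image_univ_equiv]

section Contraction

variable {e : V → ℕ} {u v : V}

omit [Fintype V] in
theorem isProperColoring_comp_update_id {G : SimpleGraph V} (he : Function.Injective e)
    (hvu : ¬ G.Adj v u) : IsProperColoring G (e ∘ Function.update id v u) := by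
  intro a b hab hc
  replace hc := he hc
  simp only [Function.update_apply, id] at hc
  split_ifs at hc with ha hb hb
  · exact G.ne_of_adj hab (ha.trans hb.symm)
  · subst ha hc
    exact hvu hab
  · subst hb hc
    exact hvu hab.symm
  · exact G.ne_of_adj hab hc

theorem card_image_comp_update_id (he : Function.Injective e) (huv : u ≠ v) :
    #(univ.image (e ∘ Function.update id v u)) + 1 = Fintype.card V := by
  have himage : univ.image (Function.update id v u) = univ.erase v := by
    ext x
    simp only [mem_image, mem_univ, true_and, mem_erase, and_true, Function.update_apply, id]
    constructor
    · rintro ⟨a, rfl⟩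
      split_ifs with hav
      exacts [huv, hav]
    · exact fun hxv => ⟨x, if_neg hxv⟩
  have hpos : 0 < Fintype.card V := Fintype.card_pos_iff.mpr ⟨v⟩
  rw [← image_image, himage, card_image_of_injective _ he, card_erase_of_mem (mem_univ v),
    card_univ]
  omega

end Contraction

section NearComplete

variable {G : SimpleGraph V} {c : V → ℕ} {x y v : V}

theorem CollidesOnlyAt.colVillainy_le_two {w : V} (h : CollidesOnlyAt c x y) (hwx : w ≠ x)
    (hwy : w ≠ y) (hnadj : ¬ G.Adj w y) : colVillainy G c ≤ 2 := by
  have hproper : IsProperColoring G (c ∘ Equiv.swap x w) :=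
    (h.comp_swap hwy).isProperColoring_iff.mpr hnadj
  calc colVillainy G c ≤ recolorCount c (c ∘ Equiv.swap x w) :=
        colVillainy_le hproper (sameColorCounts_comp_perm c _)
    _ = 2 := recolorCount_comp_swap (h.apply_ne hwx hwy).symm

variable [DecidableRel G.Adj]

theorem exists_ne_ne_not_adj (hcard : G.degree v + 3 ≤ Fintype.card V) (a : V) :
    ∃ w, w ≠ a ∧ w ≠ v ∧ ¬ G.Adj v w := by
  obtain ⟨w, -, hw⟩ := exists_mem_notMem_of_card_lt_card (t := univ)
    (s := {a, v} ∪ G.neighborFinset v) <| calc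
      #({a, v} ∪ G.neighborFinset v) ≤ #{a, v} + G.degree v := card_union_le _ _
      _ ≤ 2 + G.degree v := by gcongr; exact card_le_two
      _ < #univ := by rw [card_univ]; omega
  exact ⟨w, by simpa using hw⟩

omit [DecidableEq V] in
theorem eq_of_adj_of_adj_of_degree_le_one (hdeg : G.degree v ≤ 1) (hx : G.Adj v x)
    (hy : G.Adj v y) : x = y :=
  card_le_one.mp hdeg x ((G.mem_neighborFinset v x).mpr hx) y ((G.mem_neighborFinset v y).mpr hy)

theorem colVillainy_le_two_of_degree_le_one (hdeg : G.degree v ≤ 1)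
    (hcard : 4 ≤ Fintype.card V) (h : CollidesOnlyAt c x y) : colVillainy G c ≤ 2 := by
  wlog hyv : y ≠ v generalizing x y
  · exact this h.symm (not_not.mp hyv ▸ h.ne)
  by_cases hxv : x = v
  · subst hxv
    obtain ⟨w, hwy, hwx, hxw⟩ := exists_ne_ne_not_adj (G := G) (v := x) (by omega) y
    exact h.symm.colVillainy_le_two hwy hwx fun hwx' => hxw hwx'.symm
  wlog hvy : ¬ G.Adj v y generalizing x y
  · refine this h.symm hxv hyv fun hvx => h.ne ?_
    exact eq_of_adj_of_adj_of_degree_le_one hdeg hvx (not_not.mp hvy)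
  exact h.colVillainy_le_two (Ne.symm hxv) (Ne.symm hyv) hvy

theorem colVillainy_le_two_of_card_image (hdeg : G.degree v ≤ 1) (hcard : 4 ≤ Fintype.card V)
    (hc : #(univ.image c) + 1 = Fintype.card V) : colVillainy G c ≤ 2 :=
  have ⟨_, _, h⟩ := CollidesOnlyAt.exists_of_card_image hc
  colVillainy_le_two_of_degree_le_one hdeg hcard h

omit [DecidableRel G.Adj] in
theorem exists_perm_not_isProperColoring (hcomp : ∀ a b, a ≠ v → b ≠ v → a ≠ b → G.Adj a b)
    (hcard : 2 < Fintype.card V) (hc : IsProperColoring G c) (h : CollidesOnlyAt c x y) :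
    ∃ σ : Equiv.Perm V, ¬ IsProperColoring G (c ∘ σ) := by
  have hxy : ¬ G.Adj x y := h.isProperColoring_iff.mp hc
  wlog hxv : x = v generalizing x y
  · have hyv : y = v := by
      by_contra hyv
      exact hxy (hcomp x y hxv hyv h.ne)
    exact this h.symm (fun hyx => hxy hyx.symm) hyv
  subst hxv
  obtain ⟨w, -, hw⟩ := exists_mem_notMem_of_card_lt_card (t := univ) (s := {x, y})
    (by rw [card_univ]; exact card_le_two.trans_lt hcard)
  simp only [mem_insert, mem_singleton, not_or] at hw
  refine ⟨Equiv.swap x w, ?_⟩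
  rw [(h.comp_swap hw.2).isProperColoring_iff, not_not]
  exact hcomp w y hw.1 (Ne.symm h.ne) hw.2

end NearComplete

theorem villainy_eq_two_of_near_complete_general (G : SimpleGraph V)
    [DecidableRel G.Adj]
    (v : V) (hdeg : G.degree v ≤ 1)
    (hcomp : ∀ a b : V, a ≠ v → b ≠ v → a ≠ b → G.Adj a b)
    (hcard : 4 ≤ Fintype.card V) :
    villainy G = 2 := by
  obtain ⟨u, -, huv, hvu⟩ := exists_ne_ne_not_adj (G := G) (v := v) (by omega) v
  have he : Function.Injective fun x => (Fintype.equivFin V x : ℕ) :=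
    Fin.val_injective.comp (Fintype.equivFin V).injective
  set f : V → ℕ := (fun x => (Fintype.equivFin V x : ℕ)) ∘ Function.update id v u
  have hf : IsProperColoring G f := isProperColoring_comp_update_id he hvu
  have hfcard : #(univ.image f) + 1 = Fintype.card V := card_image_comp_update_id he huv
  have hclique : G.IsClique (univ.erase v : Set V) := fun a ha b hb =>
    hcomp a b (by simpa using ha) (by simpa using hb)
  have hχ : chromNum G + 1 = Fintype.card V := by
    have hcard_erase : #(univ.erase v) + 1 = Fintype.card V := card_erase_add_one (mem_univ v)
    rw [chromNum_eq_card_of_isClique hf hclique (by omega), hcard_erase]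
  obtain ⟨x, y, hxy⟩ := CollidesOnlyAt.exists_of_card_image hfcard
  obtain ⟨σ, hσ⟩ := exists_perm_not_isProperColoring hcomp (by omega) hf hxy
  refine IsGreatest.csSup_eq ⟨⟨f, f ∘ σ, ⟨hf, by omega⟩, ⟨σ, rfl⟩, le_antisymm ?_ ?_⟩, ?_⟩
  · exact colVillainy_le_two_of_card_image hdeg hcard (by rwa [image_univ_comp_perm])
  · exact two_le_colVillainy hσ hf (sameColorCounts_comp_perm f σ).symm
  · rintro _ ⟨g, _, ⟨-, hg⟩, ⟨τ, rfl⟩, rfl⟩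
    exact colVillainy_le_two_of_card_image hdeg hcard (by rw [image_univ_comp_perm, hg, hχ])

theorem villainy_eq_two_of_near_complete (G : SimpleGraph V)
    [DecidableRel G.Adj]
    (hnc : ¬ ∀ a b : V, a ≠ b → G.Adj a b)
    (v : V) (hdeg : G.degree v ≤ 1)
    (hcomp : ∀ a b : V, a ≠ v → b ≠ v → a ≠ b → G.Adj a b)
    (hcard : 4 ≤ Fintype.card V) :
    villainy G = 2 :=
  villainy_eq_two_of_near_complete_general G v hdeg hcomp hcard
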